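/- Let 𝒫_c be a partition of {1,...,N} and 𝒫_f a refinement of 𝒫_c, and suppose 𝒫_f is regular-sparse with respect to A. Let (g_1^{(c)},...,g_K^{(c)}) be a set of intrinsic sparse modes of A with respect to 𝒫_c and (g_1^{(f)},...,g_K^{(f)}) a set of intrinsic sparse modes of A with respect to 𝒫_f. Then there is a bijection σ of {1,...,K} such that for every k: (i) {P ∈ 𝒫_c : g_{σ(k)}^{(f)}|_P ≠ 0} = {P ∈ 𝒫_c : g_k^{(c)}|_P ≠ 0}; (ii) {P ∈ 𝒫_f : g_{σ(k)}^{(f)}|_P ≠ 0} ⊆ {P ∈ 𝒫_f : g_k^{(c)}|_P ≠ 0}; and (iii) if g_k^{(c)} is identifiable on 𝒫_c from every other mode g_{k'}^{(c)}, k' ≠ k, then g_{σ(k)}^{(f)} = ± g_k^{(c)}. -/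

import Mathlib

open Matrix BigOperators

/-- Restriction of a vector `ψ ∈ ℝ^N` to the indices in a patch `Pm`. -/
def restrictPatch {N : ℕ} (Pm : Finset (Fin N)) (ψ : Fin N → ℝ) : ↥Pm → ℝ :=
  fun i => ψ i

/-- Patch-wise sparseness `s(ψ;𝒫)`: the number of patches on which `ψ` is nonzero. -/
noncomputable def sparseness {N M : ℕ} (P : Fin M → Finset (Fin N)) (ψ : Fin N → ℝ) : ℕ :=
  {m : Fin M | restrictPatch (P m) ψ ≠ 0}.ncard

/-- `P` is a partition of `{1,...,N}` into disjoint nonempty patches. -/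
def IsPartition {N M : ℕ} (P : Fin M → Finset (Fin N)) : Prop :=
  (∀ m, (P m).Nonempty) ∧ (∀ m m', m ≠ m' → Disjoint (P m) (P m')) ∧ (∀ i, ∃ m, i ∈ P m)

/-- `K_m`: the rank of the principal submatrix `A_mm`. -/
noncomputable def patchRank {N : ℕ} (A : Matrix (Fin N) (Fin N) ℝ) (Pm : Finset (Fin N)) : ℕ :=
  (A.submatrix (fun i : ↥Pm => (i : Fin N)) (fun i : ↥Pm => (i : Fin N))).rank

/-- The partition `P` is regular-sparse w.r.t. `A`. -/
def RegularSparse {N M : ℕ} (K : ℕ) (A : Matrix (Fin N) (Fin N) ℝ)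
    (P : Fin M → Finset (Fin N)) : Prop :=
  ∃ g : Fin K → Fin N → ℝ,
    A = ∑ k, vecMulVec (g k) (g k) ∧
    ∀ m, LinearIndependent ℝ
      (fun k : {k : Fin K // restrictPatch (P m) (g k) ≠ 0} =>
        restrictPatch (P m) (g (k : Fin K)))

/-- `(ψ_1,...,ψ_K)` is a set of intrinsic sparse modes of `A` w.r.t. the partition `P`. -/
def IsISM {N M K : ℕ} (A : Matrix (Fin N) (Fin N) ℝ) (P : Fin M → Finset (Fin N))
    (ψ : Fin K → Fin N → ℝ) : Prop :=
  A = ∑ k, vecMulVec (ψ k) (ψ k) ∧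
  ∀ φ : Fin K → Fin N → ℝ, A = ∑ k, vecMulVec (φ k) (φ k) →
    ∑ k, sparseness P (ψ k) ≤ ∑ k, sparseness P (φ k)

/-- Two modes are unidentifiable on partition `P`: supported on exactly the same patches. -/
def Unidentifiable {N M : ℕ} (P : Fin M → Finset (Fin N)) (g g' : Fin N → ℝ) : Prop :=
  ∀ m, restrictPatch (P m) g ≠ 0 ↔ restrictPatch (P m) g' ≠ 0

/-- The block diagonal matrix `H_ext = diag(H_1, ..., H_M)`. -/
def Hext {N M : ℕ} (P : Fin M → Finset (Fin N)) (Km : Fin M → ℕ)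
    (H : ∀ m, Matrix ↥(P m) (Fin (Km m)) ℝ) :
    Matrix (Fin N) ((m : Fin M) × Fin (Km m)) ℝ :=
  Matrix.of fun i c => if h : i ∈ P c.1 then H c.1 ⟨i, h⟩ c.2 else 0

/-- The `(m,n)` block `Λ_mn` of a matrix indexed by `Σ m, Fin (Km m)`. -/
def ΛBlock {M : ℕ} {Km : Fin M → ℕ}
    (Λ : Matrix ((m : Fin M) × Fin (Km m)) ((m : Fin M) × Fin (Km m)) ℝ) (m n : Fin M) :
    Matrix (Fin (Km m)) (Fin (Km n)) ℝ :=
  Matrix.of fun i j => Λ ⟨m, i⟩ ⟨n, j⟩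

/-- Joint diagonalization objective: sum of squares of off-diagonal entries of `Vᵀ S_n V`. -/
noncomputable def offDiagObj {n M : ℕ} (S : Fin M → Matrix (Fin n) (Fin n) ℝ)
    (V : Matrix (Fin n) (Fin n) ℝ) : ℝ :=
  ∑ p, ∑ i, ∑ j, if i ≠ j then ((Vᵀ * S p * V) i j) ^ 2 else 0


/-!
Regular sparseness passes from `𝒫_f` to the coarser `𝒫_c`. For any decomposition
`A = ∑ φ_k φ_kᵀ`, the number of modes alive on a patch is at least the rank of the
corresponding principal block of `A`, with equality exactly when their restrictions are
linearly independent. A regular-sparse decomposition attains this bound on every patch, so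
intrinsic sparse modes, being sparsest, attain it too.

Both `g^{(c)}` and `g^{(f)}` factor `A` of rank `K`, so they differ by an orthogonal matrix `U`,
and a nonzero term of the Leibniz expansion of `det U` gives `σ` with `U_{σ(k) k} ≠ 0`. Patchwise
independence makes modes linked by a nonzero entry of `U` share their coarse support; if
`g_k^{(c)}` is identifiable, row `σ(k)` of `U` therefore has a single nonzero entry, which is `±1`.
-/

section LinearIndependence

variable {ι R M : Type*}

theorem span_image_setOf_ne_zero [Semiring R] [AddCommMonoid M] [Module R M] (v : ι → M) :
    Submodule.span R (v '' {i | v i ≠ 0}) = Submodule.span R (Set.range v) := by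
  rw [← Submodule.span_sdiff_singleton_zero (s := Set.range v)]
  congr 1
  ext x
  aesop

variable [Fintype ι]

theorem linearIndepOn_setOf_ne_zero_iff [Ring R] [AddCommGroup M] [Module R M] {v : ι → M} :
    LinearIndepOn R v {i | v i ≠ 0} ↔
      ∀ c : ι → R, ∑ i, c i • v i = 0 → ∀ i, v i ≠ 0 → c i = 0 := by
  classical
  constructor
  · intro h c hc i hi
    rw [linearIndepOn_iff'] at h
    refine h {i | v i ≠ 0} c (by simp) ?_ i (by simpa using hi)
    exact (Finset.sum_filter_of_ne fun i _ => right_ne_zero_of_smul).trans hc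
  · intro h
    rw [linearIndepOn_iff'']
    intro t c hts hc hsum i hi
    refine h c ?_ i (hts hi)
    rwa [← Finset.sum_subset t.subset_univ fun i _ hi => by rw [hc i hi, zero_smul]]

variable [DivisionRing R] [AddCommGroup M] [Module R M]

theorem finrank_span_range_le_ncard_setOf_ne_zero (v : ι → M) :
    Module.finrank R (Submodule.span R (Set.range v)) ≤ {i | v i ≠ 0}.ncard := by
  classical
  rw [← span_image_setOf_ne_zero, Set.image_eq_range, ← Nat.card_coe_set_eq,
    Nat.card_eq_fintype_card]
  exact finrank_range_le_card _

theorem linearIndepOn_setOf_ne_zero_iff_ncard_le {v : ι → M} :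
    LinearIndepOn R v {i | v i ≠ 0} ↔
      {i | v i ≠ 0}.ncard ≤ Module.finrank R (Submodule.span R (Set.range v)) := by
  classical
  rw [LinearIndepOn, linearIndependent_iff_card_le_finrank_span, Set.finrank,
    ← Set.image_eq_range, span_image_setOf_ne_zero, ← Nat.card_coe_set_eq,
    Nat.card_eq_fintype_card]

end LinearIndependence

section Patches

variable {N K : ℕ}

theorem restrictPatch_sum_smul (Pm : Finset (Fin N)) (c : Fin K → ℝ) (g : Fin K → Fin N → ℝ) :
    restrictPatch Pm (∑ k, c k • g k) = ∑ k, c k • restrictPatch Pm (g k) := by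
  funext i
  simp [restrictPatch, Finset.sum_apply]

theorem restrictPatch_eq_zero_iff {Pm : Finset (Fin N)} {ψ : Fin N → ℝ} :
    restrictPatch Pm ψ = 0 ↔ ∀ i ∈ Pm, ψ i = 0 := by
  simp [funext_iff, restrictPatch]

def PatchIndependent (Pm : Finset (Fin N)) (g : Fin K → Fin N → ℝ) : Prop :=
  LinearIndepOn ℝ (fun k => restrictPatch Pm (g k)) {k | restrictPatch Pm (g k) ≠ 0}

theorem patchIndependent_iff {Pm : Finset (Fin N)} {g : Fin K → Fin N → ℝ} :
    PatchIndependent Pm g ↔ ∀ c : Fin K → ℝ, restrictPatch Pm (∑ k, c k • g k) = 0 →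
      ∀ k, restrictPatch Pm (g k) ≠ 0 → c k = 0 := by
  simp only [PatchIndependent, linearIndepOn_setOf_ne_zero_iff, restrictPatch_sum_smul]

theorem PatchIndependent.restrictPatch_sum_smul_ne_zero {Pm : Finset (Fin N)}
    {g : Fin K → Fin N → ℝ} (hg : PatchIndependent Pm g) {c : Fin K → ℝ} {k : Fin K}
    (hc : c k ≠ 0) (hk : restrictPatch Pm (g k) ≠ 0) :
    restrictPatch Pm (∑ j, c j • g j) ≠ 0 :=
  fun h => hc (patchIndependent_iff.mp hg c h k hk)

theorem PatchIndependent.of_subpatches {M : ℕ} {Q : Finset (Fin N)}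
    {P : Fin M → Finset (Fin N)} (hcover : ∀ i ∈ Q, ∃ m, i ∈ P m ∧ P m ⊆ Q)
    {g : Fin K → Fin N → ℝ} (hg : ∀ m, PatchIndependent (P m) g) :
    PatchIndependent Q g := by
  refine patchIndependent_iff.mpr fun c hc k hk => ?_
  obtain ⟨i, hiQ, hi⟩ : ∃ i ∈ Q, g k i ≠ 0 := by
    simpa [restrictPatch_eq_zero_iff] using hk
  obtain ⟨m, him, hPQ⟩ := hcover i hiQ
  refine patchIndependent_iff.mp (hg m) c ?_ k ?_
  · rw [restrictPatch_eq_zero_iff] at hc ⊢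
    exact fun j hj => hc j (hPQ hj)
  · rw [Ne, restrictPatch_eq_zero_iff]
    exact fun h => hi (h i him)

theorem forall_mem_exists_subset_of_refines {Mc Mf : ℕ} {Pc : Fin Mc → Finset (Fin N)}
    {Pf : Fin Mf → Finset (Fin N)} (hdisj : ∀ m m', m ≠ m' → Disjoint (Pc m) (Pc m'))
    (hcover : ∀ i, ∃ m, i ∈ Pf m) (hrefine : ∀ mf, ∃ mc, Pf mf ⊆ Pc mc) (mc : Fin Mc) :
    ∀ i ∈ Pc mc, ∃ mf, i ∈ Pf mf ∧ Pf mf ⊆ Pc mc := by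
  intro i hi
  obtain ⟨mf, hmf⟩ := hcover i
  obtain ⟨mc', hsub⟩ := hrefine mf
  obtain rfl : mc' = mc := by
    by_contra hne
    exact Finset.disjoint_left.mp (hdisj mc' mc hne) (hsub hmf) hi
  exact ⟨mf, hmf, hsub⟩

theorem RegularSparse.of_subpatches {A : Matrix (Fin N) (Fin N) ℝ} {Mc Mf : ℕ}
    {Pc : Fin Mc → Finset (Fin N)} {Pf : Fin Mf → Finset (Fin N)}
    (hcover : ∀ mc, ∀ i ∈ Pc mc, ∃ mf, i ∈ Pf mf ∧ Pf mf ⊆ Pc mc)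
    (h : RegularSparse K A Pf) : RegularSparse K A Pc := by
  obtain ⟨g, hA, hg⟩ := h
  exact ⟨g, hA, fun mc => PatchIndependent.of_subpatches (hcover mc) hg⟩

end Patches

section IntrinsicSparseModes

variable {N M K : ℕ}

theorem sum_vecMulVec_self_eq_transpose_mul {ι n : Type*} [Fintype ι] (g : ι → n → ℝ) :
    ∑ k, vecMulVec (g k) (g k) = (Matrix.of g)ᵀ * Matrix.of g := by
  ext i j
  simp [Matrix.sum_apply, Matrix.mul_apply, vecMulVec_apply]

theorem patchRank_eq_finrank_span {A : Matrix (Fin N) (Fin N) ℝ} {φ : Fin K → Fin N → ℝ}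
    (hA : A = ∑ k, vecMulVec (φ k) (φ k)) (Pm : Finset (Fin N)) :
    patchRank A Pm =
      Module.finrank ℝ (Submodule.span ℝ (Set.range fun k => restrictPatch Pm (φ k))) := by
  have hsub : A.submatrix (fun i : ↥Pm => (i : Fin N)) (fun i : ↥Pm => (i : Fin N)) =
      ∑ k, vecMulVec (restrictPatch Pm (φ k)) (restrictPatch Pm (φ k)) := by
    ext i j
    simp [hA, Matrix.sum_apply, vecMulVec_apply, restrictPatch]
  rw [patchRank, hsub, sum_vecMulVec_self_eq_transpose_mul, rank_transpose_mul_self,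
    rank_eq_finrank_span_row]
  rfl

theorem patchRank_le_ncard {A : Matrix (Fin N) (Fin N) ℝ} {φ : Fin K → Fin N → ℝ}
    (hA : A = ∑ k, vecMulVec (φ k) (φ k)) (Pm : Finset (Fin N)) :
    patchRank A Pm ≤ {k | restrictPatch Pm (φ k) ≠ 0}.ncard := by
  rw [patchRank_eq_finrank_span hA]
  exact finrank_span_range_le_ncard_setOf_ne_zero _

theorem patchIndependent_iff_ncard_le_patchRank {A : Matrix (Fin N) (Fin N) ℝ}
    {φ : Fin K → Fin N → ℝ} (hA : A = ∑ k, vecMulVec (φ k) (φ k)) (Pm : Finset (Fin N)) :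
    PatchIndependent Pm φ ↔ {k | restrictPatch Pm (φ k) ≠ 0}.ncard ≤ patchRank A Pm := by
  rw [patchRank_eq_finrank_span hA, PatchIndependent, linearIndepOn_setOf_ne_zero_iff_ncard_le]

theorem sum_sparseness_eq_sum_ncard (P : Fin M → Finset (Fin N)) (ψ : Fin K → Fin N → ℝ) :
    ∑ k, sparseness P (ψ k) = ∑ m, {k | restrictPatch (P m) (ψ k) ≠ 0}.ncard := by
  classical
  simp only [sparseness, Set.ncard_eq_toFinset_card', Set.toFinset_ofPred, Finset.card_filter]
  exact Finset.sum_comm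

theorem IsISM.patchIndependent {A : Matrix (Fin N) (Fin N) ℝ} {P : Fin M → Finset (Fin N)}
    {ψ : Fin K → Fin N → ℝ} (hψ : IsISM A P ψ) (hreg : RegularSparse K A P) (m : Fin M) :
    PatchIndependent (P m) ψ := by
  obtain ⟨g, hgA, hg⟩ := hreg
  have hlower := fun m => patchRank_le_ncard hψ.1 (P m)
  have hsum : ∑ m, {k | restrictPatch (P m) (ψ k) ≠ 0}.ncard ≤ ∑ m, patchRank A (P m) :=
    calc ∑ m, {k | restrictPatch (P m) (ψ k) ≠ 0}.ncard
        = ∑ k, sparseness P (ψ k) := (sum_sparseness_eq_sum_ncard P ψ).symm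
      _ ≤ ∑ k, sparseness P (g k) := hψ.2 g hgA
      _ = ∑ m, {k | restrictPatch (P m) (g k) ≠ 0}.ncard := sum_sparseness_eq_sum_ncard P g
      _ ≤ ∑ m, patchRank A (P m) := Finset.sum_le_sum fun m _ =>
          (patchIndependent_iff_ncard_le_patchRank hgA (P m)).mp (hg m)
  have heq := (Finset.sum_eq_sum_iff_of_le fun m _ => hlower m).mp
    (le_antisymm (Finset.sum_le_sum fun m _ => hlower m) hsum)
  exact (patchIndependent_iff_ncard_le_patchRank hψ.1 (P m)).mpr (heq m (Finset.mem_univ m)).ge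

end IntrinsicSparseModes

namespace Matrix

variable {l m n : Type*} [Fintype m]

theorem eq_of_mul_eq_mul_of_linearIndependent_row {A : Matrix m n ℝ}
    (hA : LinearIndependent ℝ A.row) {X Y : Matrix l m ℝ} (h : X * A = Y * A) : X = Y :=
  funext fun i => vecMul_injective_iff.mpr hA <| funext fun j => by
    simpa only [mul_apply_eq_vecMul] using congrFun (congrFun h i) j

theorem range_mulVecLin_transpose_mul_self [Fintype n] (R : Matrix m n ℝ) :
    LinearMap.range (Rᵀ * R).mulVecLin = LinearMap.range Rᵀ.mulVecLin := by
  refine Submodule.eq_of_le_of_finrank_eq ?_ ?_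
  · rw [mulVecLin_mul]
    exact LinearMap.range_comp_le_range _ _
  · change (Rᵀ * R).rank = Rᵀ.rank
    rw [rank_transpose_mul_self, rank_transpose]

-- Equal Gram matrices give equal row spaces, so `S = U * R`; cancelling the independent rows
-- of `R` from `Rᵀ * R = Rᵀ * (Uᵀ * U) * R` leaves `Uᵀ * U = 1`.
theorem exists_mem_orthogonalGroup_eq_mul [Fintype n] [DecidableEq m] {R S : Matrix m n ℝ}
    (hR : LinearIndependent ℝ R.row) (h : Rᵀ * R = Sᵀ * S) :
    ∃ U ∈ orthogonalGroup m ℝ, S = U * R := by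
  have hrow : ∀ i, ∃ u, u ᵥ* R = S i := by
    intro i
    have hi : S i ∈ LinearMap.range Rᵀ.mulVecLin := by
      rw [← range_mulVecLin_transpose_mul_self, h, range_mulVecLin_transpose_mul_self]
      refine ⟨Pi.single i 1, ?_⟩
      rw [mulVecLin_apply, mulVec_transpose, single_vecMul, one_smul]
      rfl
    obtain ⟨u, hu⟩ := hi
    exact ⟨u, by rwa [mulVecLin_apply, mulVec_transpose] at hu⟩
  choose u hu using hrow
  obtain ⟨U, hU⟩ : ∃ U : Matrix m m ℝ, ∀ i, U i ᵥ* R = S i := ⟨of u, hu⟩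
  have hSU : S = U * R := funext fun i => funext fun j => by
    rw [mul_apply_eq_vecMul, hU]
  refine ⟨U, (mem_orthogonalGroup_iff' m ℝ).mpr ?_, hSU⟩
  have hgram : Rᵀ * ((Uᵀ * U) * R) = Rᵀ * R := by
    rw [h, hSU, transpose_mul]
    simp only [Matrix.mul_assoc]
  have hcols : (Uᵀ * U) * R = R := by
    have h' := congrArg transpose hgram
    rw [transpose_mul Rᵀ, transpose_mul Rᵀ R, transpose_transpose] at h'
    exact transpose_injective (eq_of_mul_eq_mul_of_linearIndependent_row hR h')
  exact eq_of_mul_eq_mul_of_linearIndependent_row hR (hcols.trans (Matrix.one_mul R).symm)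

theorem exists_perm_forall_ne_zero_of_det_ne_zero [DecidableEq m] {U : Matrix m m ℝ}
    (hU : U.det ≠ 0) : ∃ σ : Equiv.Perm m, ∀ i, U (σ i) i ≠ 0 := by
  by_contra! h
  refine hU (det_apply U ▸ Finset.sum_eq_zero fun σ _ => ?_)
  obtain ⟨i, hi⟩ := h σ
  rw [Finset.prod_eq_zero (f := fun j => U (σ j) j) (Finset.mem_univ i) hi, smul_zero]

theorem eq_one_or_eq_neg_one_of_mem_orthogonalGroup [DecidableEq m] {U : Matrix m m ℝ}
    (hU : U ∈ orthogonalGroup m ℝ) {i k : m} (hrow : ∀ j, j ≠ k → U i j = 0) :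
    U i k = 1 ∨ U i k = -1 := by
  have h := congrFun (congrFun ((mem_orthogonalGroup_iff m ℝ).mp hU) i) i
  rw [mul_apply, one_apply_eq, Finset.sum_eq_single k (fun j _ hj => by
    rw [hrow j hj, zero_mul]) (by simp)] at h
  exact mul_self_eq_one_iff.mp h

end Matrix

section FactorComparison

variable {ι n : Type*} [Fintype ι] [Fintype n]

theorem linearIndependent_of_rank_sum_vecMulVec {g : ι → n → ℝ}
    (h : (∑ k, vecMulVec (g k) (g k)).rank = Fintype.card ι) : LinearIndependent ℝ g := by
  rw [sum_vecMulVec_self_eq_transpose_mul, rank_transpose_mul_self,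
    rank_eq_finrank_span_row] at h
  exact linearIndependent_iff_card_eq_finrank_span.mpr h.symm

theorem exists_mem_orthogonalGroup_of_sum_vecMulVec_eq [DecidableEq ι] {g g' : ι → n → ℝ}
    (hg : LinearIndependent ℝ g)
    (h : ∑ k, vecMulVec (g k) (g k) = ∑ k, vecMulVec (g' k) (g' k)) :
    ∃ U ∈ orthogonalGroup ι ℝ,
      (∀ k, g' k = ∑ j, U k j • g j) ∧ ∀ j, g j = ∑ k, U k j • g' k := by
  rw [sum_vecMulVec_self_eq_transpose_mul, sum_vecMulVec_self_eq_transpose_mul] at h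
  obtain ⟨U, hU, hSU⟩ := exists_mem_orthogonalGroup_eq_mul (R := of g) hg h
  have hRU : of g = Uᵀ * of g' := by
    rw [hSU, ← Matrix.mul_assoc, (mem_orthogonalGroup_iff' ι ℝ).mp hU, Matrix.one_mul]
  refine ⟨U, hU, fun k => funext fun i => ?_, fun j => funext fun i => ?_⟩
  · simpa [Matrix.mul_apply, Finset.sum_apply, mul_comm] using congrFun (congrFun hSU k) i
  · simpa [Matrix.mul_apply, Finset.sum_apply, mul_comm] using congrFun (congrFun hRU j) i

end FactorComparison

section Identifiability

variable {N M K : ℕ} {P : Fin M → Finset (Fin N)}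

theorem Unidentifiable.symm {g g' : Fin N → ℝ} (h : Unidentifiable P g g') :
    Unidentifiable P g' g :=
  fun m => (h m).symm

theorem Unidentifiable.trans {g g' g'' : Fin N → ℝ} (h : Unidentifiable P g g')
    (h' : Unidentifiable P g' g'') : Unidentifiable P g g'' :=
  fun m => (h m).trans (h' m)

theorem unidentifiable_of_mutual_expansion {g g' : Fin K → Fin N → ℝ}
    (hg : ∀ m, PatchIndependent (P m) g) (hg' : ∀ m, PatchIndependent (P m) g')
    {c d : Fin K → ℝ} {j k : Fin K} (hk : g' k = ∑ i, c i • g i) (hj : g j = ∑ i, d i • g' i)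
    (hc : c j ≠ 0) (hd : d k ≠ 0) : Unidentifiable P (g' k) (g j) :=
  fun m => ⟨fun h => hj ▸ (hg' m).restrictPatch_sum_smul_ne_zero hd h,
    fun h => hk ▸ (hg m).restrictPatch_sum_smul_ne_zero hc h⟩

end Identifiability

theorem ismd_consistency_under_refinement_general
    {N Mc Mf K : ℕ} (A : Matrix (Fin N) (Fin N) ℝ)
    (hrank : A.rank = K)
    (Pc : Fin Mc → Finset (Fin N)) (hPc : IsPartition Pc)
    (Pf : Fin Mf → Finset (Fin N)) (hPf : IsPartition Pf)
    (hrefine : ∀ mf, ∃ mc, Pf mf ⊆ Pc mc)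
    (hreg : RegularSparse K A Pf)
    (gc : Fin K → Fin N → ℝ) (hgc : IsISM A Pc gc)
    (gf : Fin K → Fin N → ℝ) (hgf : IsISM A Pf gf) :
    ∃ σ : Equiv.Perm (Fin K), ∀ k : Fin K,
      (∀ mc, restrictPatch (Pc mc) (gf (σ k)) ≠ 0 ↔ restrictPatch (Pc mc) (gc k) ≠ 0) ∧
      (∀ mf, restrictPatch (Pf mf) (gf (σ k)) ≠ 0 → restrictPatch (Pf mf) (gc k) ≠ 0) ∧
      ((∀ k', k' ≠ k → ¬ Unidentifiable Pc (gc k) (gc k')) →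
        gf (σ k) = gc k ∨ gf (σ k) = fun i => -(gc k i)) := by
  have hcover := forall_mem_exists_subset_of_refines hPc.2.1 hPf.2.2 hrefine
  have indep_c := hgc.patchIndependent (hreg.of_subpatches hcover)
  have indep_f := hgf.patchIndependent hreg
  have indep_fc : ∀ mc, PatchIndependent (Pc mc) gf :=
    fun mc => .of_subpatches (hcover mc) indep_f
  have hgc_indep : LinearIndependent ℝ gc :=
    linearIndependent_of_rank_sum_vecMulVec (by rw [← hgc.1, hrank, Fintype.card_fin])
  obtain ⟨U, hU, hgf_exp, hgc_exp⟩ :=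
    exists_mem_orthogonalGroup_of_sum_vecMulVec_eq hgc_indep (hgc.1.symm.trans hgf.1)
  obtain ⟨σ, hσ⟩ := exists_perm_forall_ne_zero_of_det_ne_zero
    (det_ne_zero_of_left_inverse ((mem_orthogonalGroup_iff' (Fin K) ℝ).mp hU))
  have same_support : ∀ k j, U k j ≠ 0 → Unidentifiable Pc (gf k) (gc j) :=
    fun k j h => unidentifiable_of_mutual_expansion indep_c indep_fc (hgf_exp k) (hgc_exp j) h h
  refine ⟨σ, fun k => ⟨same_support _ _ (hσ k), fun mf h => ?_, fun hident => ?_⟩⟩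
  · rw [hgc_exp k]
    exact (indep_f mf).restrictPatch_sum_smul_ne_zero (hσ k) h
  · have hrow : ∀ j, j ≠ k → U (σ k) j = 0 := fun j hj => by
      by_contra h
      exact hident j hj ((same_support _ _ (hσ k)).symm.trans (same_support _ _ h))
    have hsingle : gf (σ k) = U (σ k) k • gc k := by
      rw [hgf_exp, Finset.sum_eq_single k (fun j _ hj => by rw [hrow j hj, zero_smul]) (by simp)]
    rcases eq_one_or_eq_neg_one_of_mem_orthogonalGroup hU hrow with h | h
    · exact .inl (by rw [hsingle, h, one_smul])
    · exact .inr (by rw [hsingle, h, neg_one_smul]; rfl)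

/-- Theorem 3.2 of the paper, consistency of the ISMD. Let `𝒫_f` be a
refinement of `𝒫_c` which is regular-sparse w.r.t. `A`, and let `g^{(c)}`, `g^{(f)}` be
intrinsic sparse modes of `A` w.r.t. `𝒫_c` and `𝒫_f` respectively. Then, after matching the
modes by a bijection `σ`: (i) `g^{(f)}_{σ(k)}` and `g^{(c)}_k` are supported on the same
coarse patches; (ii) the fine support patches of `g^{(f)}_{σ(k)}` are contained in those of
`g^{(c)}_k`; (iii) if `g^{(c)}_k` is identifiable on `𝒫_c` from every other coarse mode,
then `g^{(f)}_{σ(k)} = ± g^{(c)}_k`. -/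
theorem ismd_consistency_under_refinement
    {N Mc Mf K : ℕ} (A : Matrix (Fin N) (Fin N) ℝ)
    (hA : A.PosSemidef) (hrank : A.rank = K)
    (Pc : Fin Mc → Finset (Fin N)) (hPc : IsPartition Pc)
    (Pf : Fin Mf → Finset (Fin N)) (hPf : IsPartition Pf)
    (hrefine : ∀ mf, ∃ mc, Pf mf ⊆ Pc mc)
    (hreg : RegularSparse K A Pf)
    (gc : Fin K → Fin N → ℝ) (hgc : IsISM A Pc gc)
    (gf : Fin K → Fin N → ℝ) (hgf : IsISM A Pf gf) :
    ∃ σ : Equiv.Perm (Fin K), ∀ k : Fin K,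
      (∀ mc, restrictPatch (Pc mc) (gf (σ k)) ≠ 0 ↔ restrictPatch (Pc mc) (gc k) ≠ 0) ∧
      (∀ mf, restrictPatch (Pf mf) (gf (σ k)) ≠ 0 → restrictPatch (Pf mf) (gc k) ≠ 0) ∧
      ((∀ k', k' ≠ k → ¬ Unidentifiable Pc (gc k) (gc k')) →
        gf (σ k) = gc k ∨ gf (σ k) = fun i => -(gc k i)) :=
  ismd_consistency_under_refinement_general A hrank Pc hPc Pf hPf hrefine hreg gc hgc gf hgf
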